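/- There exists an absolute constant C₂ > 0 with the following property. Let V : ℝ → ℝ be bounded measurable, fix x ∈ ℝ, and suppose D_V ∈ L²(ℝ). For every h > 0, with v_n = (2n+1)πh and (B_d g)_n = i h Σ_{m∈ℤ} g_m ∫_{−1/(2h)}^{1/(2h)} D_V(y)·(e^{i(v_n − v_m)y} − e^{−i v_m y})/v_n dy, the sum over the high-velocity indices satisfies Σ_{n∈ℤ, |(2n+1)πh| > 1} |(B_d g)_n|² ≤ C₂·‖D_V‖²_{L²(ℝ)}·‖g‖²_{ℓ²(ℤ)} for all g ∈ ℓ²(ℤ). -/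

import Mathlib

open MeasureTheory Real

/-- Velocity grid point `v_n = (2n+1)πh`. -/
noncomputable def vpt (h : ℝ) (n : ℤ) : ℝ := (2 * (n : ℝ) + 1) * π * h

/-- The discrete singularity-free Wigner operator
`(B_d g)_n = i h Σ_m g_m ∫_{−1/(2h)}^{1/(2h)} D_V(y)
  (e^{i(v_n−v_m)y} − e^{−i v_m y})/v_n dy`. -/
noncomputable def Bd (V : ℝ → ℝ) (x h : ℝ) (g : ℤ → ℂ) (n : ℤ) : ℂ :=
  Complex.I * (h : ℂ) *
    ∑' m : ℤ, g m *
      ∫ y in Set.Icc (-(1 / (2 * h))) (1 / (2 * h)),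
        ((V (x + y / 2) - V (x - y / 2) : ℝ) : ℂ) *
          (Complex.exp (Complex.I * ((vpt h n - vpt h m : ℝ) : ℂ) * (y : ℂ)) -
            Complex.exp (-(Complex.I * ((vpt h m : ℝ) : ℂ) * (y : ℂ)))) /
          ((vpt h n : ℝ) : ℂ)

/-!
On the window `|y| ≤ 1/(2h)`, of length `1/h`, both exponentials of the kernel are Fourier
modes of period `1/h`: `e^{i(vₙ-vₘ)y}` has index `n - m`, and `e^{-ivₘy} = e^{-iπhy} e^{-2πihmy}`
has index `-m` once the phase `e^{-iπhy}` is absorbed into `D_V`. Hence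
`(B_d g)ₙ = (i/vₙ) Σₘ gₘ (c₁(m - n) - c₂(m))`, where `c₁`, `c₂` are the Fourier coefficients
of `D_V` and of `D_V(y) e^{-iπhy}` on the window. By Parseval both have `ℓ²` norm squared at
most `h ‖D_V‖²`, so Cauchy–Schwarz gives `|(B_d g)ₙ|² ≤ 4h ‖D_V‖² ‖g‖² / vₙ²`. Finally
`Σ_{|vₙ|>1} 1/vₙ² ≤ 6/(πh)` by comparison with a telescoping sum, leaving the constant
`24/π ≤ 8`.
-/

theorem summable_mul_and_norm_tsum_mul_le {ι R : Type*} [NormedRing R] [CompleteSpace R]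
    {f g : ι → R} (hf : Summable fun i => ‖f i‖ ^ 2) (hg : Summable fun i => ‖g i‖ ^ 2) :
    Summable (fun i => f i * g i) ∧
      ‖∑' i, f i * g i‖ ≤ √(∑' i, ‖f i‖ ^ 2) * √(∑' i, ‖g i‖ ^ 2) := by
  simp only [← rpow_natCast, Nat.cast_ofNat] at hf hg
  obtain ⟨hsum, hle⟩ := summable_and_inner_le_Lp_mul_Lq_tsum_of_nonneg HolderConjugate.two_two
    (fun i => norm_nonneg (f i)) (fun i => norm_nonneg (g i)) hf hg
  have hnorm : Summable fun i => ‖f i * g i‖ :=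
    hsum.of_nonneg_of_le (fun i => norm_nonneg _) fun i => norm_mul_le _ _
  refine ⟨hnorm.of_norm, ?_⟩
  calc ‖∑' i, f i * g i‖ ≤ ∑' i, ‖f i‖ * ‖g i‖ :=
        (norm_tsum_le_tsum_norm hnorm).trans
          (hnorm.tsum_le_tsum (fun i => norm_mul_le _ _) hsum)
    _ ≤ _ := hle
    _ = √(∑' i, ‖f i‖ ^ 2) * √(∑' i, ‖g i‖ ^ 2) := by
        simp only [sqrt_eq_rpow, ← rpow_natCast, Nat.cast_ofNat]

theorem norm_tsum_mul_sub_le {g c₁ c₂ : ℤ → ℂ} (n : ℤ) (hg : Summable fun m => ‖g m‖ ^ 2)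
    (hc₁ : Summable fun k => ‖c₁ k‖ ^ 2) (hc₂ : Summable fun k => ‖c₂ k‖ ^ 2) :
    ‖∑' m, g m * (c₁ (m - n) - c₂ m)‖ ≤
      √(∑' m, ‖g m‖ ^ 2) * (√(∑' k, ‖c₁ k‖ ^ 2) + √(∑' k, ‖c₂ k‖ ^ 2)) := by
  have hshift : Summable fun m => ‖c₁ (m - n)‖ ^ 2 :=
    (Equiv.subRight n).summable_iff.mpr hc₁
  obtain ⟨hs₁, hle₁⟩ := summable_mul_and_norm_tsum_mul_le hg hshift
  obtain ⟨hs₂, hle₂⟩ := summable_mul_and_norm_tsum_mul_le hg hc₂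
  rw [show ∑' m, ‖c₁ (m - n)‖ ^ 2 = ∑' k, ‖c₁ k‖ ^ 2 from
    (Equiv.subRight n).tsum_eq fun k => ‖c₁ k‖ ^ 2] at hle₁
  simp only [mul_sub]
  rw [hs₁.tsum_sub hs₂, mul_add]
  exact (norm_sub_le _ _).trans (add_le_add hle₁ hle₂)

theorem Antitone.sum_sub_succ_le {g : ℕ → ℝ} (hg : Antitone g) (hg0 : ∀ k, 0 ≤ g k)
    (t : Finset ℕ) : ∑ k ∈ t, (g k - g (k + 1)) ≤ g 0 := by
  have hsub : t ⊆ Finset.range (t.sup id + 1) := fun k hk =>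
    Finset.mem_range.mpr (Nat.lt_succ_of_le (Finset.le_sup (f := id) hk))
  calc ∑ k ∈ t, (g k - g (k + 1))
      ≤ ∑ k ∈ Finset.range (t.sup id + 1), (g k - g (k + 1)) :=
        Finset.sum_le_sum_of_subset_of_nonneg hsub fun k _ _ =>
          sub_nonneg.mpr (hg k.le_succ)
    _ = g 0 - g (t.sup id + 1) := Finset.sum_range_sub' g _
    _ ≤ g 0 := sub_le_self _ (hg0 _)

/-- Telescoping against `k ↦ min 1 (1 / ((2k+1)a))`, whose increments dominate the terms. -/
theorem sum_one_div_odd_mul_sq_le_of_nat {a : ℝ} (ha : 0 < a) (t : Finset ℕ)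
    (ht : ∀ k ∈ t, 1 < (2 * (k : ℝ) + 1) * a) :
    ∑ k ∈ t, 1 / ((2 * (k : ℝ) + 1) * a) ^ 2 ≤ 3 / a := by
  set g : ℕ → ℝ := fun k => min 1 (1 / ((2 * (k : ℝ) + 1) * a))
  have hg : Antitone g := antitone_nat_of_succ_le fun k => by
    refine min_le_min le_rfl (one_div_le_one_div_of_le (by positivity) ?_)
    push_cast
    nlinarith
  have hterm : ∀ k ∈ t, 1 / ((2 * (k : ℝ) + 1) * a) ^ 2 ≤ 3 / a * (g k - g (k + 1)) := by
    intro k hk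
    set u := (2 * (k : ℝ) + 1) * a
    have hu : 1 < u := ht k hk
    have hua : a ≤ u := by nlinarith [(k.cast_nonneg : (0 : ℝ) ≤ k)]
    have hsucc : (2 * ((k + 1 : ℕ) : ℝ) + 1) * a = u + 2 * a := by push_cast; ring
    have hgk : g k = 1 / u := min_eq_right ((div_le_one (by linarith)).mpr hu.le)
    have hgk1 : g (k + 1) = 1 / (u + 2 * a) := by
      simp only [g, hsucc]
      exact min_eq_right ((div_le_one (by linarith)).mpr (by linarith))
    have hu0 : 0 < u := by linarith
    have hincr : 3 / a * (1 / u - 1 / (u + 2 * a)) = 6 / (u * (u + 2 * a)) := by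
      field_simp
      ring
    rw [hgk, hgk1, hincr, div_le_div_iff₀ (by positivity) (by positivity)]
    nlinarith
  calc ∑ k ∈ t, 1 / ((2 * (k : ℝ) + 1) * a) ^ 2
      ≤ ∑ k ∈ t, 3 / a * (g k - g (k + 1)) := Finset.sum_le_sum hterm
    _ = 3 / a * ∑ k ∈ t, (g k - g (k + 1)) := (Finset.mul_sum _ _ _).symm
    _ ≤ 3 / a * 1 := by
        gcongr
        exact (hg.sum_sub_succ_le (fun k => le_min zero_le_one (by positivity)) t).trans
          (min_le_left _ _)
    _ = 3 / a := mul_one _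

theorem sum_one_div_odd_mul_sq_le {a : ℝ} (ha : 0 < a) (s : Finset ℤ)
    (hs : ∀ n ∈ s, 1 < |(2 * (n : ℝ) + 1) * a|) :
    ∑ n ∈ s, 1 / ((2 * (n : ℝ) + 1) * a) ^ 2 ≤ 6 / a := by
  classical
  have hsplit : s.filter (· ∉ Set.range Int.ofNat) = s.filter (· ∈ Set.range Int.negSucc) :=
    Finset.filter_congr fun n _ => by rcases n with k | k <;> simp
  rw [← Finset.sum_filter_add_sum_filter_not s (· ∈ Set.range Int.ofNat), hsplit,
    ← Finset.sum_preimage' Int.ofNat s Int.ofNat_injective.injOn,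
    ← Finset.sum_preimage' Int.negSucc s (fun _ _ _ _ h => Int.negSucc.inj h)]
  have hnegSucc (k : ℕ) :
      (2 * ((Int.negSucc k : ℤ) : ℝ) + 1) * a = -((2 * (k : ℝ) + 1) * a) := by
    push_cast [Int.cast_negSucc]
    ring
  simp only [hnegSucc, neg_sq]
  have hterm (k : ℕ) : 0 < (2 * (k : ℝ) + 1) * a := by positivity
  refine (add_le_add (sum_one_div_odd_mul_sq_le_of_nat ha _ fun k hk => ?_)
    (sum_one_div_odd_mul_sq_le_of_nat ha _ fun k hk => ?_)).trans_eq (by ring)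
  · simpa [abs_of_pos (hterm k)] using hs _ (Finset.mem_preimage.mp hk)
  · have := hs _ (Finset.mem_preimage.mp hk)
    rwa [hnegSucc, abs_neg, abs_of_pos (hterm k)] at this

theorem tsum_one_lt_abs_vpt_le {h : ℝ} (hh : 0 < h) {F : ℤ → ℝ} {C : ℝ} (hC : 0 ≤ C)
    (hF : ∀ n, F n ≤ C / vpt h n ^ 2) :
    ∑' n : {n : ℤ // 1 < |vpt h n|}, F n ≤ 6 * C / (π * h) := by
  have hvpt (n : ℤ) : vpt h n = (2 * (n : ℝ) + 1) * (π * h) := mul_assoc _ _ _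
  refine tsum_le_of_sum_le' (by positivity) fun s => ?_
  set t := s.map (Function.Embedding.subtype _)
  calc ∑ n ∈ s, F n ≤ ∑ n ∈ t, C * (1 / ((2 * (n : ℝ) + 1) * (π * h)) ^ 2) := by
        rw [Finset.sum_map]
        refine Finset.sum_le_sum fun n _ => (hF n).trans_eq ?_
        rw [Function.Embedding.subtype_apply, hvpt, mul_one_div]
    _ = C * ∑ n ∈ t, 1 / ((2 * (n : ℝ) + 1) * (π * h)) ^ 2 := (Finset.mul_sum _ _ _).symm
    _ ≤ C * (6 / (π * h)) := by
        refine mul_le_mul_of_nonneg_left (sum_one_div_odd_mul_sq_le (by positivity) _ ?_) hC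
        intro n hn
        obtain ⟨n, -, rfl⟩ := Finset.mem_map.mp hn
        simpa [hvpt] using n.2
    _ = 6 * C / (π * h) := by ring

theorem intervalIntegral_mul_exp_eq_fourierCoeffOn {a b : ℝ} (hab : a < b) (f : ℝ → ℂ)
    (k : ℤ) :
    ∫ y in a..b, f y * Complex.exp (2 * π * Complex.I * k * y / (b - a)) =
      (b - a) * fourierCoeffOn hab f (-k) := by
  have hba : (b : ℂ) - a ≠ 0 := by exact_mod_cast (sub_pos.mpr hab).ne'
  simp only [fourierCoeffOn_eq_integral, neg_neg, fourier_coe_apply, smul_eq_mul,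
    Complex.real_smul, mul_comm (f _)]
  push_cast
  rw [← mul_assoc, mul_one_div_cancel hba, one_mul]

theorem summable_and_tsum_sq_fourierCoeffOn_le {a b : ℝ} (hab : a < b) {f : ℝ → ℂ}
    (hf : MemLp f 2 volume) :
    Summable (fun k => ‖fourierCoeffOn hab f k‖ ^ 2) ∧
      ∑' k, ‖fourierCoeffOn hab f k‖ ^ 2 ≤ (b - a)⁻¹ * ∫ y, ‖f y‖ ^ 2 := by
  have hpars := hasSum_sq_fourierCoeffOn hab (hf.restrict _)
  refine ⟨hpars.summable, hpars.tsum_eq.trans_le ?_⟩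
  rw [smul_eq_mul, intervalIntegral.integral_of_le hab.le]
  exact mul_le_mul_of_nonneg_left (setIntegral_le_integral (hf.integrable_norm_pow two_ne_zero)
    (Filter.Eventually.of_forall fun y => by positivity)) (inv_nonneg.mpr (sub_pos.mpr hab).le)

/-- Since `vₙ - vₘ = 2πh (n - m)` and `-vₘ = -πh + 2πh (-m)`, both exponentials are Fourier
modes of period `1 / h`, the length of the integration interval. -/
theorem setIntegral_mul_exp_sub_exp_eq_fourierCoeffOn {D : ℝ → ℝ} {h : ℝ}
    (hab : -(1 / (2 * h)) < 1 / (2 * h))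
    (hD : IntegrableOn D (Set.Ioc (-(1 / (2 * h))) (1 / (2 * h)))) (n m : ℤ) :
    ∫ y in Set.Icc (-(1 / (2 * h))) (1 / (2 * h)), (D y : ℂ) *
        (Complex.exp (Complex.I * ((vpt h n - vpt h m : ℝ) : ℂ) * y) -
          Complex.exp (-(Complex.I * (vpt h m : ℂ) * y))) =
      (fourierCoeffOn hab (fun y => (D y : ℂ)) (m - n) -
        fourierCoeffOn hab (fun y => D y * Complex.exp (-(π * h * y * Complex.I))) m) / h := by
  have hh : (h : ℂ) ≠ 0 := by
    rintro h0
    simp_all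
  have hlen : ((1 / (2 * h) : ℝ) : ℂ) - ((-(1 / (2 * h)) : ℝ) : ℂ) = 1 / h := by
    push_cast
    field_simp
    ring
  have hD' : IntervalIntegrable (fun y => (D y : ℂ)) volume (-(1 / (2 * h))) (1 / (2 * h)) :=
    (intervalIntegrable_iff_integrableOn_Ioc_of_le hab.le).mpr hD.ofReal
  have hmodes (y : ℝ) : (D y : ℂ) *
        (Complex.exp (Complex.I * ((vpt h n - vpt h m : ℝ) : ℂ) * y) -
          Complex.exp (-(Complex.I * (vpt h m : ℂ) * y))) =
      D y * Complex.exp (2 * π * Complex.I * ((n - m : ℤ) : ℂ) * y /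
        (((1 / (2 * h) : ℝ) : ℂ) - ((-(1 / (2 * h)) : ℝ) : ℂ))) -
      D y * Complex.exp (-(π * h * y * Complex.I)) * Complex.exp (2 * π * Complex.I *
        ((-m : ℤ) : ℂ) * y / (((1 / (2 * h) : ℝ) : ℂ) - ((-(1 / (2 * h)) : ℝ) : ℂ))) := by
    rw [hlen, mul_assoc _ (Complex.exp _), ← Complex.exp_add, mul_sub]
    congr 3 <;> simp only [vpt] <;> push_cast <;> field_simp <;> ring
  rw [integral_Icc_eq_integral_Ioc, ← intervalIntegral.integral_of_le hab.le]
  simp_rw [hmodes]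
  rw [intervalIntegral.integral_sub (hD'.mul_continuousOn (by fun_prop))
    ((hD'.mul_continuousOn (by fun_prop)).mul_continuousOn (by fun_prop)),
    intervalIntegral_mul_exp_eq_fourierCoeffOn hab,
    intervalIntegral_mul_exp_eq_fourierCoeffOn hab, hlen, neg_sub, neg_neg]
  ring

theorem Bd_eq_tsum_fourierCoeffOn {V : ℝ → ℝ} {x h : ℝ} (hab : -(1 / (2 * h)) < 1 / (2 * h))
    (hD : IntegrableOn (fun y => V (x + y / 2) - V (x - y / 2))
      (Set.Ioc (-(1 / (2 * h))) (1 / (2 * h))))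
    (g : ℤ → ℂ) (n : ℤ) :
    Bd V x h g n = Complex.I / vpt h n * ∑' m, g m *
      (fourierCoeffOn hab (fun y => ((V (x + y / 2) - V (x - y / 2) : ℝ) : ℂ)) (m - n) -
        fourierCoeffOn hab (fun y => (V (x + y / 2) - V (x - y / 2) : ℝ) *
          Complex.exp (-(π * h * y * Complex.I))) m) := by
  have hh : (h : ℂ) ≠ 0 := by
    rintro h0
    simp_all
  simp only [Bd, integral_div, setIntegral_mul_exp_sub_exp_eq_fourierCoeffOn hab hD]
  rw [← tsum_mul_left, ← tsum_mul_left]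
  refine tsum_congr fun m => ?_
  field_simp

theorem norm_Bd_sq_le {V : ℝ → ℝ} {x h : ℝ} (hh : 0 < h)
    (hD : MemLp (fun y => V (x + y / 2) - V (x - y / 2)) 2 volume)
    {g : ℤ → ℂ} (hg : Summable fun m => ‖g m‖ ^ 2) (n : ℤ) :
    ‖Bd V x h g n‖ ^ 2 ≤
      4 * (∑' m, ‖g m‖ ^ 2) * (h * ∫ y, (V (x + y / 2) - V (x - y / 2)) ^ 2) / vpt h n ^ 2 := by
  set D : ℝ → ℝ := fun y => V (x + y / 2) - V (x - y / 2)
  have hab : -(1 / (2 * h)) < 1 / (2 * h) := neg_lt_self (by positivity)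
  have hlen : (1 / (2 * h) - -(1 / (2 * h)))⁻¹ = h := by field_simp; ring
  have hmod (y : ℝ) :
      ‖(D y : ℂ) * Complex.exp (-(π * h * y * Complex.I))‖ = ‖(D y : ℂ)‖ := by
    rw [norm_mul, Complex.norm_exp]
    simp
  have hsq (y : ℝ) : ‖(D y : ℂ)‖ ^ 2 = D y ^ 2 := by
    rw [Complex.norm_real, norm_eq_abs, sq_abs]
  have hf₁ : MemLp (fun y => (D y : ℂ)) 2 volume := hD.ofReal
  have hf₂ : MemLp (fun y => (D y : ℂ) * Complex.exp (-(π * h * y * Complex.I))) 2 volume :=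
    hf₁.congr_norm (hf₁.1.mul (by fun_prop)) (Filter.Eventually.of_forall fun y => (hmod y).symm)
  obtain ⟨hs₁, hle₁⟩ := summable_and_tsum_sq_fourierCoeffOn_le hab hf₁
  obtain ⟨hs₂, hle₂⟩ := summable_and_tsum_sq_fourierCoeffOn_le hab hf₂
  simp only [hlen, hmod, hsq] at hle₁ hle₂
  set G := ∑' m, ‖g m‖ ^ 2
  set S := h * ∫ y, D y ^ 2
  have hG : 0 ≤ G := tsum_nonneg fun m => by positivity
  have hS : 0 ≤ S := mul_nonneg hh.le (integral_nonneg fun y => sq_nonneg _)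
  have hsum := (norm_tsum_mul_sub_le n hg hs₁ hs₂).trans <| mul_le_mul_of_nonneg_left
    (add_le_add (sqrt_le_sqrt hle₁) (sqrt_le_sqrt hle₂)) (sqrt_nonneg G)
  rw [Bd_eq_tsum_fourierCoeffOn hab ((hD.restrict _).integrable one_le_two), norm_mul, norm_div,
    Complex.norm_I, Complex.norm_real, norm_eq_abs, mul_pow, div_pow, sq_abs, one_pow]
  calc 1 / vpt h n ^ 2 * ‖∑' m, _‖ ^ 2 ≤ 1 / vpt h n ^ 2 * (√G * (√S + √S)) ^ 2 := by
        gcongr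
    _ = 4 * G * S / vpt h n ^ 2 := by
        rw [mul_pow, ← two_mul, mul_pow, sq_sqrt hG, sq_sqrt hS]
        ring

/-- There is an absolute constant `C₂ > 0` such that for
every bounded measurable `V` and every `x` with `D_V ∈ L²(ℝ)`, every `h > 0`
and every `g ∈ ℓ²(ℤ)`, the high-velocity part satisfies
`Σ_{|(2n+1)πh| > 1} |(B_d g)_n|² ≤ C₂ ‖D_V‖²_{L²(ℝ)} ‖g‖²_{ℓ²}`. -/
theorem stmt15 :
    ∃ C₂ : ℝ, 0 < C₂ ∧
      ∀ (V : ℝ → ℝ), Measurable V → (∃ c : ℝ, ∀ t : ℝ, |V t| ≤ c) →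
        ∀ x : ℝ,
          MemLp (fun y : ℝ => V (x + y / 2) - V (x - y / 2)) 2
            (volume : Measure ℝ) →
          ∀ h : ℝ, 0 < h → ∀ g : ℤ → ℂ, Memℓp g 2 →
            ∑' n : {n : ℤ // 1 < |vpt h n|}, ‖Bd V x h g (n : ℤ)‖ ^ 2 ≤
              C₂ * (∫ y : ℝ, (V (x + y / 2) - V (x - y / 2)) ^ 2) *
                ∑' m : ℤ, ‖g m‖ ^ 2 := by
  refine ⟨8, by norm_num, fun V _ _ x hD h hh g hg => ?_⟩
  have hg2 : Summable fun m => ‖g m‖ ^ 2 := by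
    simpa using hg.summable (by norm_num : 0 < (2 : ENNReal).toReal)
  set K := ∫ y, (V (x + y / 2) - V (x - y / 2)) ^ 2
  set G := ∑' m, ‖g m‖ ^ 2
  have hK : 0 ≤ K := integral_nonneg fun y => sq_nonneg _
  have hG : 0 ≤ G := tsum_nonneg fun m => sq_nonneg _
  calc _ ≤ 6 * (4 * G * (h * K)) / (π * h) :=
        tsum_one_lt_abs_vpt_le hh (by positivity) (norm_Bd_sq_le hh hD hg2)
    _ = 24 / π * K * G := by
        field_simp
        ring
    _ ≤ 8 * K * G := by
        gcongr
        rw [div_le_iff₀ pi_pos]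
        linarith [pi_gt_three]
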